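/- Let p and q be distinct primitive words and k ≥ 2 an integer. Then pq = u^k for some primitive word u if and only if either (a) p = (xq)^{k-1} x for some nonempty word x with xq primitive, or (b) there exist an integer s with 1 ≤ s ≤ k-1 and nonempty words α, β such that p = (βα)^{k-s-1} β, q = (αβ)^s α, and αβ is primitive. -/
import Mathlib


variable {A : Type*}

/-- k-fold concatenation of a word with itself. -/
def pw (w : List A) : ℕ → List A
  | 0 => []
  | n + 1 => w ++ pw w n

/-- A nonempty word is primitive if it is not a proper power. -/
def Primitive (w : List A) : Prop :=
  w ≠ [] ∧ ∀ (v : List A) (m : ℕ), w = pw v m → m = 1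

theorem pw_length (w : List A) (n : ℕ) : (pw w n).length = n * w.length := by
  induction n with
  | zero => simp [pw]
  | succ n ih => simp [pw, ih]; ring

theorem pw_add (w : List A) (a b : ℕ) : pw w (a + b) = pw w a ++ pw w b := by
  induction a with
  | zero => simp [pw]
  | succ a ih => rw [Nat.succ_add, pw, ih, pw, List.append_assoc]

theorem pw_succ' (w : List A) (n : ℕ) : pw w (n + 1) = pw w n ++ w := by
  rw [pw_add]; simp [pw]

theorem pw_shift (x y : List A) (n : ℕ) :
    y ++ pw (x ++ y) n = pw (y ++ x) n ++ y := by
  induction n with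
  | zero => simp [pw]
  | succ n ih =>
      rw [pw, pw, List.append_assoc (y ++ x), ← ih]
      simp [List.append_assoc]

theorem pw_split (v x y : List A) (m : ℕ) (h : x ++ y = pw v m)
    (hlt : x.length < m * v.length) :
    x = pw v (x.length / v.length) ++ v.take (x.length % v.length) ∧
    y = v.drop (x.length % v.length) ++ pw v (m - x.length / v.length - 1) := by
  have hv : 0 < v.length := by
    rcases Nat.eq_zero_or_pos v.length with h0 | h0
    · simp [h0] at hlt
    · exact h0
  set a := x.length / v.length with ha
  set t := x.length % v.length with ht
  have hdm : v.length * a + t = x.length := Nat.div_add_mod _ _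
  have hcomm : a * v.length = v.length * a := Nat.mul_comm _ _
  have htv : t < v.length := Nat.mod_lt _ hv
  have ham : a < m := by
    rw [ha, Nat.div_lt_iff_lt_mul hv]
    omega
  have hsplit : pw v m = pw v a ++ (v ++ pw v (m - a - 1)) := by
    have : m = a + (1 + (m - a - 1)) := by omega
    rw [this, pw_add, pw_add]
    simp [pw]
  have hx : x = (pw v m).take x.length := by
    rw [← h, List.take_left]
  have hy : y = (pw v m).drop x.length := by
    rw [← h, List.drop_left]
  have hlen : (pw v a).length = a * v.length := pw_length v a
  constructor
  · rw [hx, hsplit, List.take_append, hlen]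
    have h1 : (pw v a).take x.length = pw v a := by
      apply List.take_of_length_le
      rw [hlen]; omega
    have h2 : x.length - a * v.length = t := by omega
    rw [h1, h2, List.take_append]
    have h3 : t - v.length = 0 := by omega
    rw [h3]
    simp
  · rw [hy, hsplit, List.drop_append, hlen]
    have h1 : (pw v a).drop x.length = [] := by
      apply List.drop_eq_nil_of_le
      rw [hlen]; omega
    have h2 : x.length - a * v.length = t := by omega
    rw [h1, h2, List.drop_append]
    have h3 : t - v.length = 0 := by omega
    rw [h3]
    simp

theorem pwConjPow (v x y : List A) (m : ℕ) (h : y ++ x = pw v m) (hm : 1 ≤ m) :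
    ∃ w, x ++ y = pw w m := by
  rcases eq_or_ne x [] with rfl | hx
  · exact ⟨v, by simpa using h⟩
  · have hylt : y.length < m * v.length := by
      have := congrArg List.length h
      simp [pw_length] at this
      have : y.length + x.length = m * v.length := by simpa using this
      have hx0 : 0 < x.length := List.length_pos_iff.mpr hx
      omega
    obtain ⟨h1, h2⟩ := pw_split v y x m h hylt
    set a := y.length / v.length
    set t := y.length % v.length
    refine ⟨v.drop t ++ v.take t, ?_⟩
    rw [h1, h2]
    have key : pw v (m - a - 1) ++ (pw v a ++ v.take t) =
        pw v (m - 1) ++ v.take t := by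
      rw [← List.append_assoc, ← pw_add]
      congr 2
      have : a < m := by
        have hv : 0 < v.length := by
          rcases Nat.eq_zero_or_pos v.length with h0 | h0
          · simp [h0] at hylt
          · exact h0
        rw [Nat.div_lt_iff_lt_mul hv]; omega
      omega
    rw [List.append_assoc, key]
    have hv' : pw v (m - 1) = pw (v.take t ++ v.drop t) (m - 1) := by
      rw [List.take_append_drop]
    rw [← List.append_assoc, hv', pw_shift, List.append_assoc, ← pw_succ']
    congr 1
    omega

theorem conj_prim (x y : List A) (h : Primitive (x ++ y)) : Primitive (y ++ x) := by
  obtain ⟨hne, hmin⟩ := h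
  constructor
  · intro h0
    apply hne
    have := List.append_eq_nil_iff.mp h0
    simp [this.1, this.2]
  · intro v m hv
    rcases Nat.eq_zero_or_pos m with rfl | hm
    · exfalso; apply hne
      have : y ++ x = [] := by simpa [pw] using hv
      have := List.append_eq_nil_iff.mp this
      simp [this.1, this.2]
    · obtain ⟨w, hw⟩ := pwConjPow v x y m hv hm
      exact hmin w m hw

theorem pq_kth_power_characterization (p q : List A) (hp : Primitive p) (hq : Primitive q)
    (hpq : p ≠ q) (k : ℕ) (hk : 2 ≤ k) :
    (∃ u : List A, Primitive u ∧ p ++ q = pw u k) ↔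
      ((∃ x : List A, x ≠ [] ∧ Primitive (x ++ q) ∧ p = pw (x ++ q) (k - 1) ++ x) ∨
        (∃ (s : ℕ) (α β : List A), 1 ≤ s ∧ s ≤ k - 1 ∧ α ≠ [] ∧ β ≠ [] ∧
          Primitive (α ++ β) ∧ p = pw (β ++ α) (k - s - 1) ++ β ∧ q = pw (α ++ β) s ++ α)) := by
  constructor
  · rintro ⟨u, hu, heq⟩
    have hu0 : 0 < u.length := List.length_pos_iff.mpr hu.1
    have hq0 : 0 < q.length := List.length_pos_iff.mpr hq.1
    have hp0 : 0 < p.length := List.length_pos_iff.mpr hp.1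
    have hlensum : p.length + q.length = k * u.length := by
      have := congrArg List.length heq
      simpa [pw_length] using this
    have hplt : p.length < k * u.length := by omega
    obtain ⟨h1, h2⟩ := pw_split u p q k heq hplt
    set a := p.length / u.length with ha
    set t := p.length % u.length with ht
    clear_value a t
    have htv : t < u.length := by rw [ht]; exact Nat.mod_lt _ hu0
    have ham : a < k := by rw [ha, Nat.div_lt_iff_lt_mul hu0]; omega
    rcases Nat.eq_zero_or_pos t with ht0 | ht0
    · -- t = 0 : contradiction
      exfalso
      rw [ht0] at h1 h2
      simp at h1 h2
      have ha1 : a = 1 := hp.2 u a h1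
      have h2' : q = pw u (k - a - 1 + 1) := by rw [pw]; exact h2
      have hk1 : k - a - 1 + 1 = 1 := hq.2 u _ h2'
      have hk2 : k = 2 := by omega
      apply hpq
      rw [h1, h2', hk1, ha1]
    · have hα : u.take t ≠ [] := by
        intro h0
        have h5 := congrArg List.length h0
        rw [List.length_take] at h5
        simp only [List.length_nil] at h5
        omega
      have hβ : u.drop t ≠ [] := by
        intro h0
        have h5 := congrArg List.length h0
        rw [List.length_drop] at h5
        simp only [List.length_nil] at h5
        omega
      rcases eq_or_lt_of_le (Nat.succ_le_of_lt ham) with hak | hak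
      · -- a = k - 1 : case (a)
        left
        have haeq : a = k - 1 := by omega
        have hq' : q = u.drop t := by
          rw [h2, haeq]
          have : k - (k - 1) - 1 = 0 := by omega
          rw [this]
          simp [pw]
        refine ⟨u.take t, hα, ?_, ?_⟩
        · rw [hq', List.take_append_drop]; exact hu
        · rw [hq', List.take_append_drop, h1, haeq]
      · -- a < k - 1 : case (b)
        right
        refine ⟨k - a - 1, u.drop t, u.take t, by omega, by omega, hβ, hα, ?_, ?_, ?_⟩
        · exact conj_prim (u.take t) (u.drop t)
            (by rw [List.take_append_drop]; exact hu)
        · have h3 : k - (k - a - 1) - 1 = a := by omega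
          rw [List.take_append_drop, h3]
          exact h1
        · rw [h2]
          have : pw u (k - a - 1) = pw (u.take t ++ u.drop t) (k - a - 1) := by
            rw [List.take_append_drop]
          rw [this, pw_shift]
  · rintro (⟨x, hx, hprim, hpeq⟩ | ⟨s, α, β, hs1, hs2, hα, hβ, hprim, hpeq, hqeq⟩)
    · refine ⟨x ++ q, hprim, ?_⟩
      rw [hpeq, List.append_assoc, ← pw_succ']
      congr 1
      omega
    · refine ⟨β ++ α, conj_prim α β hprim, ?_⟩
      rw [hpeq, hqeq, List.append_assoc, ← List.append_assoc β, pw_shift,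
        List.append_assoc, ← List.append_assoc,
        ← pw_add, ← pw_succ']
      congr 1
      omega
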